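/- arXiv:2002.01100 — 6 statements merged into one kernel-verified Lean document; each statement's English description precedes it below -/
import Mathlib

section
/- Let κ, λ ∈ (0,1), let Γ be the set of bounded measures on [n] of density at least κ, let μ₁ be the measure with μ₁(i) = κ for all i, and let ℓ₁,…,ℓ_T : [n] → [0,1] be loss vectors. Define the unprojected measure μ̃_{T+1}(i) = e^{−λ·Σ_{t=1}^T ℓ_t(i)}·μ₁(i) and let μ_{T+1} = Π_Γ μ̃_{T+1} be its Bregman projection onto Γ. Then μ_{T+1} minimizes, over all μ ∈ Γ, the objective λ·|μ|·Σ_{t=1}^T M(μ̂, ℓ_t) + KL(μ‖μ₁), where M(μ̂, ℓ_t) = Σᵢ μ̂(i)·ℓ_t(i). -/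
/-- KL divergence between bounded measures on `Fin n`. -/
noncomputable def KLdiv {n : ℕ} (μ₁ μ₂ : Fin n → ℝ) : ℝ :=
  ∑ i, (μ₁ i * Real.log (μ₁ i / μ₂ i) + μ₂ i - μ₁ i)

/-- A bounded measure on `[n]` is a function into `[0,1]`. -/
def IsBddMeasure {n : ℕ} (μ : Fin n → ℝ) : Prop := ∀ i, μ i ∈ Set.Icc (0:ℝ) 1

/-- `ν` is the Bregman projection of `μ̃` onto the set `Γ` of κ-dense bounded
measures: it lies in `Γ` and minimizes `KL(·‖μ̃)` there. -/
def IsBregmanProj {n : ℕ} (κ : ℝ) (μt ν : Fin n → ℝ) : Prop :=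
  (IsBddMeasure ν ∧ κ * n ≤ ∑ i, ν i) ∧
    ∀ ρ : Fin n → ℝ, IsBddMeasure ρ → κ * n ≤ ∑ i, ρ i → KLdiv ν μt ≤ KLdiv ρ μt

/-! Tilting the reference measure by `e^{-c·w}` changes `KL(μ‖·)` by the linear term `c·Σ μ w`
plus a constant independent of `μ`. With `w = Σ_t ℓ_t`, that linear term is exactly the
accumulated loss `c·|μ|·Σ_t M(μ̂, ℓ_t)`, so the regularized objective and `KL(·‖μ̃_{T+1})` differ
by a constant on `Γ` and share their minimizer `Π_Γ μ̃_{T+1}`. -/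

lemma KLdiv_exp_neg_mul_smul {n : ℕ} (μ ν w : Fin n → ℝ) (c : ℝ) (hν : ∀ i, ν i ≠ 0) :
    KLdiv μ (fun i => Real.exp (-c * w i) * ν i) =
      KLdiv μ ν + c * ∑ i, μ i * w i + ∑ i, (Real.exp (-c * w i) * ν i - ν i) := by
  simp only [KLdiv, Finset.mul_sum, ← Finset.sum_add_distrib]
  refine Finset.sum_congr rfl fun i _ => ?_
  have hlog : μ i * Real.log (μ i / (Real.exp (-c * w i) * ν i))
      = μ i * Real.log (μ i / ν i) + c * (μ i * w i) := by
    rcases eq_or_ne (μ i) 0 with h | h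
    · simp [h]
    · rw [div_mul_eq_div_div_swap, Real.log_div (div_ne_zero h (hν i)) (Real.exp_ne_zero _),
        Real.log_exp]
      ring
  rw [hlog]
  ring

lemma sum_mul_sum_div_sum_mul {n : ℕ} (μ f : Fin n → ℝ) (hμ : ∀ i, 0 ≤ μ i) :
    (∑ i, μ i) * ∑ i, μ i / (∑ k, μ k) * f i = ∑ i, μ i * f i := by
  rcases eq_or_ne (∑ i, μ i) 0 with h | h
  · have hzero : ∀ i, μ i = 0 := by
      simpa using (Finset.sum_eq_zero_iff_of_nonneg fun i _ => hμ i).mp h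
    simp [hzero]
  · rw [Finset.mul_sum]
    refine Finset.sum_congr rfl fun i _ => ?_
    field_simp

theorem lazy_dense_update_minimizes_regularized_loss_general {n : ℕ} {T : ℕ}
    (κ lam : ℝ) (hκ : κ ∈ Set.Ioo (0:ℝ) 1)
    (μ₁ : Fin n → ℝ) (hμ₁ : ∀ i, μ₁ i = κ)
    (ℓ : Fin T → Fin n → ℝ)
    (μproj : Fin n → ℝ)
    (hproj : IsBregmanProj κ
      (fun i => Real.exp (-lam * ∑ t, ℓ t i) * μ₁ i) μproj) :
    ∀ μ : Fin n → ℝ, IsBddMeasure μ → κ * n ≤ ∑ i, μ i →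
      lam * (∑ i, μproj i) * (∑ t, ∑ i, (μproj i / ∑ k, μproj k) * ℓ t i)
          + KLdiv μproj μ₁ ≤
        lam * (∑ i, μ i) * (∑ t, ∑ i, (μ i / ∑ k, μ k) * ℓ t i)
          + KLdiv μ μ₁ := by
  intro μ hμ hμ_dense
  have hμ₁_ne : ∀ i, μ₁ i ≠ 0 := fun i => hμ₁ i ▸ hκ.1.ne'
  have objective_eq : ∀ ρ : Fin n → ℝ, IsBddMeasure ρ →
      lam * (∑ i, ρ i) * (∑ t, ∑ i, (ρ i / ∑ k, ρ k) * ℓ t i) + KLdiv ρ μ₁ =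
        KLdiv ρ (fun i => Real.exp (-lam * ∑ t, ℓ t i) * μ₁ i)
          - ∑ i, (Real.exp (-lam * ∑ t, ℓ t i) * μ₁ i - μ₁ i) := by
    intro ρ hρ
    have hloss : (∑ i, ρ i) * (∑ t, ∑ i, (ρ i / ∑ k, ρ k) * ℓ t i) =
        ∑ i, ρ i * ∑ t, ℓ t i := by
      simp only [Finset.sum_comm (γ := Fin T), ← Finset.mul_sum]
      exact sum_mul_sum_div_sum_mul ρ _ fun i => (hρ i).1
    rw [KLdiv_exp_neg_mul_smul _ _ _ _ hμ₁_ne, mul_assoc, hloss]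
    ring
  rw [objective_eq μproj hproj.1.1, objective_eq μ hμ]
  linarith [hproj.2 μ hμ hμ_dense]

/-- **Lazy dense updates minimize the regularized loss.**  The lazily projected
multiplicative-weights measure `μ_{T+1} = Π_Γ(e^{−λΣ_t ℓ_t}·μ₁)` minimizes
`λ|μ|·Σ_t M(μ̂, ℓ_t) + KL(μ‖μ₁)` over all κ-dense measures `μ`. -/
theorem lazy_dense_update_minimizes_regularized_loss {n : ℕ} {T : ℕ}
    (κ lam : ℝ) (hκ : κ ∈ Set.Ioo (0:ℝ) 1) (hlam : lam ∈ Set.Ioo (0:ℝ) 1)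
    (μ₁ : Fin n → ℝ) (hμ₁ : ∀ i, μ₁ i = κ)
    (ℓ : Fin T → Fin n → ℝ) (hℓ : ∀ t i, ℓ t i ∈ Set.Icc (0:ℝ) 1)
    (μproj : Fin n → ℝ)
    (hproj : IsBregmanProj κ
      (fun i => Real.exp (-lam * ∑ t, ℓ t i) * μ₁ i) μproj) :
    ∀ μ : Fin n → ℝ, IsBddMeasure μ → κ * n ≤ ∑ i, μ i →
      lam * (∑ i, μproj i) * (∑ t, ∑ i, (μproj i / ∑ k, μproj k) * ℓ t i)
          + KLdiv μproj μ₁ ≤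
        lam * (∑ i, μ i) * (∑ t, ∑ i, (μ i / ∑ k, μ k) * ℓ t i)
          + KLdiv μ μ₁ :=
  lazy_dense_update_minimizes_regularized_loss_general κ lam hκ μ₁ hμ₁ ℓ μproj hproj
end

section
/- Let κ, λ ∈ (0,1), let Γ be the set of bounded measures on [n] of density at least κ, let μ₁ be the measure with μ₁(i) = κ for all i, and let ℓ₁,…,ℓ_T : [n] → [0,1] be loss vectors. For each t ≥ 1 define μ_{t+1} = Π_Γ( i ↦ e^{−λ·Σ_{s=1}^t ℓ_s(i)}·μ₁(i) ). Then for every μ ∈ Γ, Σ_{t=1}^T M(μ̂_{t+1}, ℓ_t) ≤ Σ_{t=1}^T M(μ̂, ℓ_t) + KL(μ‖μ₁)/(λκn), where M(μ̂, ℓ_t) = Σᵢ μ̂(i)·ℓ_t(i). -/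
lemma kl_term_nonneg {a b : ℝ} (ha : 0 ≤ a) (hb : 0 < b) :
    0 ≤ a * Real.log (a / b) + b - a := by
  rcases eq_or_lt_of_le ha with h | h
  · simp [← h]; linarith
  · have h3 := Real.log_le_sub_one_of_pos (show (0:ℝ) < b / a by positivity)
    have h1 : Real.log (a / b) = Real.log a - Real.log b := Real.log_div h.ne' hb.ne'
    have h2 : Real.log (b / a) = Real.log b - Real.log a := Real.log_div hb.ne' h.ne'
    rw [h1]; rw [h2] at h3
    have h4 : a * (Real.log a - Real.log b) ≥ a * (1 - b / a) := by
      apply mul_le_mul_of_nonneg_left _ h.le; linarith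
    have h5 : a * (1 - b / a) = a - b := by field_simp
    linarith

lemma KLdiv_nonneg {n : ℕ} {ρ μ2 : Fin n → ℝ} (hρ : ∀ i, 0 ≤ ρ i) (h2 : ∀ i, 0 < μ2 i) :
    0 ≤ KLdiv ρ μ2 :=
  Finset.sum_nonneg fun i _ => kl_term_nonneg (hρ i) (h2 i)

lemma KLdiv_exp_decomp {n : ℕ} (lam : ℝ) (L μ₁ : Fin n → ℝ) (hμ₁ : ∀ i, 0 < μ₁ i)
    (ρ : Fin n → ℝ) (hρ : ∀ i, 0 ≤ ρ i) :
    KLdiv ρ (fun i => Real.exp (-lam * L i) * μ₁ i)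
      = KLdiv ρ μ₁ + lam * ∑ i, ρ i * L i
        + ∑ i, (Real.exp (-lam * L i) * μ₁ i - μ₁ i) := by
  unfold KLdiv
  rw [Finset.mul_sum, ← Finset.sum_add_distrib, ← Finset.sum_add_distrib]
  apply Finset.sum_congr rfl
  intro i _
  have key : ρ i * Real.log (ρ i / (Real.exp (-lam * L i) * μ₁ i))
      = ρ i * Real.log (ρ i / μ₁ i) + lam * (ρ i * L i) := by
    rcases eq_or_lt_of_le (hρ i) with h | h
    · simp [← h]
    · have he : Real.exp (-lam * L i) ≠ 0 := (Real.exp_pos _).ne'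
      rw [Real.log_div h.ne' (mul_pos (Real.exp_pos _) (hμ₁ i)).ne', Real.log_div h.ne' (hμ₁ i).ne',
        Real.log_mul he (hμ₁ i).ne', Real.log_exp]
      ring
  rw [key]; ring

lemma KLdiv_scale_le {n : ℕ} (κ c : ℝ) (hκ : 0 < κ) (hc0 : 0 < c) (hc1 : c ≤ 1)
    (ν : Fin n → ℝ) (hν : ∀ i, 0 ≤ ν i) (hsize : c * ∑ i, ν i = κ * n) :
    KLdiv (fun i => c * ν i) (fun _ => κ) ≤ KLdiv ν (fun _ => κ) := by
  set V := ∑ i, ν i with hV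
  set A := ∑ i, ν i * Real.log (ν i / κ) with hA
  have hVnn : 0 ≤ V := Finset.sum_nonneg fun i _ => hν i
  have e1 : KLdiv (fun i => c * ν i) (fun _ => κ)
      = c * A + c * Real.log c * V + κ * n - c * V := by
    unfold KLdiv
    have : ∀ i ∈ Finset.univ, (c * ν i * Real.log (c * ν i / κ) + κ - c * ν i)
        = c * (ν i * Real.log (ν i / κ)) + c * Real.log c * ν i + κ - c * ν i := by
      intro i _
      rcases eq_or_lt_of_le (hν i) with h | h
      · simp [← h]
      · have : c * ν i / κ = c * (ν i / κ) := by ring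
        rw [this, Real.log_mul hc0.ne' (by positivity)]
        ring
    rw [Finset.sum_congr rfl this]
    simp [Finset.sum_add_distrib, Finset.sum_sub_distrib, ← Finset.mul_sum,
      Finset.sum_const, Finset.card_univ, hA, hV]
    ring
  have e2 : KLdiv ν (fun _ => κ) = A + κ * n - V := by
    unfold KLdiv
    simp [Finset.sum_add_distrib, Finset.sum_sub_distrib, Finset.sum_const,
      Finset.card_univ, hA, hV]
    ring
  have hKL : 0 ≤ KLdiv ν (fun _ => κ) := KLdiv_nonneg hν fun _ => hκ
  have hAlb : V - c * V ≤ A := by rw [e2] at hKL; nlinarith [hsize]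
  have hlog : Real.log c ≤ c - 1 := by
    have := Real.log_le_sub_one_of_pos hc0; linarith
  rw [e1, e2]
  nlinarith [mul_le_mul_of_nonneg_left hAlb (by linarith : (0:ℝ) ≤ 1 - c),
    mul_le_mul_of_nonneg_right hlog (mul_nonneg hc0.le hVnn)]

/-- **"Be-the-leader" bound for lazy dense updates.**  With
`μ_{t+1} = Π_Γ(e^{−λΣ_{s≤t} ℓ_s}·μ₁)`, the one-step-lookahead play satisfies, for
every κ-dense `μ`, `Σ_{t=1}^T M(μ̂_{t+1}, ℓ_t) ≤ Σ_t M(μ̂, ℓ_t) + KL(μ‖μ₁)/(λκn)`. -/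
theorem lazy_dense_be_the_leader {n : ℕ} (hn : 0 < n) (T : ℕ)
    (κ lam : ℝ) (hκ : κ ∈ Set.Ioo (0:ℝ) 1) (hlam : lam ∈ Set.Ioo (0:ℝ) 1)
    (μ₁ : Fin n → ℝ) (hμ₁ : ∀ i, μ₁ i = κ)
    (ℓ : ℕ → Fin n → ℝ) (hℓ : ∀ t, 1 ≤ t → t ≤ T → ∀ i, ℓ t i ∈ Set.Icc (0:ℝ) 1)
    (μ : ℕ → Fin n → ℝ)
    (hproj : ∀ t, 1 ≤ t → t ≤ T →
      IsBregmanProj κ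
        (fun i => Real.exp (-lam * ∑ s ∈ Finset.Icc 1 t, ℓ s i) * μ₁ i) (μ (t + 1))) :
    ∀ ν : Fin n → ℝ, IsBddMeasure ν → κ * n ≤ ∑ i, ν i →
      ∑ t ∈ Finset.Icc 1 T, ∑ i, (μ (t + 1) i / ∑ k, μ (t + 1) k) * ℓ t i ≤
        (∑ t ∈ Finset.Icc 1 T, ∑ i, (ν i / ∑ k, ν k) * ℓ t i)
          + KLdiv ν μ₁ / (lam * κ * n) := by
  intro ν hν hνsize
  obtain ⟨hκ0, hκ1⟩ := hκ
  obtain ⟨hlam0, hlam1⟩ := hlam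
  have hnpos : (0:ℝ) < n := Nat.cast_pos.mpr hn
  have hκn : 0 < κ * n := mul_pos hκ0 hnpos
  have hμ₁pos : ∀ i, 0 < μ₁ i := fun i => (hμ₁ i) ▸ hκ0
  have hμ₁eq : μ₁ = fun _ => κ := funext hμ₁
  have hKLν : 0 ≤ KLdiv ν μ₁ := KLdiv_nonneg (fun i => (hν i).1) hμ₁pos
  have hlκn : (0:ℝ) < lam * κ * n := by positivity
  -- trivial case T = 0
  rcases Nat.eq_zero_or_pos T with hT | hT
  · subst hT
    rw [show Finset.Icc 1 0 = (∅ : Finset ℕ) from Finset.Icc_eq_empty (by omega)]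
    simp only [Finset.sum_empty]
    have := div_nonneg hKLν hlκn.le
    linarith
  -- set up scaled comparator
  have hVpos : 0 < ∑ i, ν i := lt_of_lt_of_le hκn hνsize
  set c := κ * n / (∑ i, ν i) with hcdef
  have hc0 : 0 < c := div_pos hκn hVpos
  have hc1 : c ≤ 1 := (div_le_one hVpos).mpr hνsize
  have hcV : c * ∑ i, ν i = κ * n := by
    rw [hcdef]; field_simp
  set ν' : Fin n → ℝ := fun i => c * ν i with hν'def
  have hν'bdd : IsBddMeasure ν' := by
    intro i
    constructor
    · exact mul_nonneg hc0.le (hν i).1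
    · show c * ν i ≤ 1
      nlinarith [mul_nonneg hc0.le (sub_nonneg.mpr (hν i).2)]
  have hν'sum : ∑ i, ν' i = κ * n := by
    rw [hν'def, ← Finset.mul_sum]; exact hcV
  -- regularized objective
  set G : ℕ → (Fin n → ℝ) → ℝ :=
    fun t ρ => KLdiv ρ μ₁ + lam * ∑ i, ρ i * ∑ s ∈ Finset.Icc 1 t, ℓ s i with hGdef
  have hmem : ∀ t, 1 ≤ t → t ≤ T → IsBddMeasure (μ (t+1)) ∧ κ * n ≤ ∑ i, μ (t+1) i :=
    fun t h1 h2 => (hproj t h1 h2).1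
  have hmin : ∀ t, 1 ≤ t → t ≤ T → ∀ ρ : Fin n → ℝ, IsBddMeasure ρ → κ * n ≤ ∑ i, ρ i →
      G t (μ (t+1)) ≤ G t ρ := by
    intro t h1 h2 ρ hρ hρs
    have hopt := (hproj t h1 h2).2 ρ hρ hρs
    rw [KLdiv_exp_decomp lam _ μ₁ hμ₁pos _ (fun i => ((hmem t h1 h2).1 i).1),
        KLdiv_exp_decomp lam _ μ₁ hμ₁pos ρ (fun i => (hρ i).1)] at hopt
    simp only [hGdef]
    linarith
  -- be-the-leader induction
  have key : ∀ T' : ℕ, 1 ≤ T' → T' ≤ T →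
      lam * ∑ t ∈ Finset.Icc 1 T', (∑ i, μ (t+1) i * ℓ t i) ≤ G T' (μ (T'+1)) := by
    intro T'
    induction T' with
    | zero => intro h; exact absurd h (by omega)
    | succ k ih =>
      intro _ hkT
      rcases Nat.eq_zero_or_pos k with hk | hk
      · subst hk
        have hKL : 0 ≤ KLdiv (μ (0+1+1)) μ₁ :=
          KLdiv_nonneg (fun i => ((hmem 1 le_rfl hkT).1 i).1) hμ₁pos
        simp only [hGdef, zero_add, Finset.Icc_self, Finset.sum_singleton]
        linarith
      · have hstep := ih hk (by omega)
        have hm := hmem (k+1) (by omega) hkT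
        have hGle : G k (μ (k+1)) ≤ G k (μ (k+1+1)) :=
          hmin k hk (by omega) (μ (k+1+1)) hm.1 hm.2
        have hsplit1 : ∑ t ∈ Finset.Icc 1 (k+1), (∑ i, μ (t+1) i * ℓ t i)
            = (∑ t ∈ Finset.Icc 1 k, (∑ i, μ (t+1) i * ℓ t i))
              + ∑ i, μ (k+1+1) i * ℓ (k+1) i := by
          rw [Finset.sum_Icc_succ_top (by omega : 1 ≤ k + 1)]
        have hGsplit : G (k+1) (μ (k+1+1))
            = G k (μ (k+1+1)) + lam * ∑ i, μ (k+1+1) i * ℓ (k+1) i := by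
          simp only [hGdef]
          have hterm : ∀ i ∈ Finset.univ,
              μ (k+1+1) i * ∑ s ∈ Finset.Icc 1 (k+1), ℓ s i
              = μ (k+1+1) i * ∑ s ∈ Finset.Icc 1 k, ℓ s i + μ (k+1+1) i * ℓ (k+1) i := by
            intro i _
            rw [Finset.sum_Icc_succ_top (by omega : 1 ≤ k + 1)]; ring
          rw [Finset.sum_congr rfl hterm, Finset.sum_add_distrib]
          ring
        rw [hsplit1, hGsplit]
        linarith
  have h1 := key T hT le_rfl
  have h2 := hmin T hT le_rfl ν' hν'bdd (le_of_eq hν'sum.symm)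
  have hswap : ∑ i, ν' i * ∑ s ∈ Finset.Icc 1 T, ℓ s i
      = ∑ t ∈ Finset.Icc 1 T, ∑ i, ν' i * ℓ t i := by
    simp_rw [Finset.mul_sum]
    exact Finset.sum_comm
  have hKLs : KLdiv ν' μ₁ ≤ KLdiv ν μ₁ := by
    rw [hμ₁eq, hν'def]
    exact KLdiv_scale_le κ c hκ0 hc0 hc1 ν (fun i => (hν i).1) hcV
  have main : lam * ∑ t ∈ Finset.Icc 1 T, (∑ i, μ (t+1) i * ℓ t i)
      ≤ KLdiv ν μ₁ + lam * ∑ t ∈ Finset.Icc 1 T, ∑ i, ν' i * ℓ t i := by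
    rw [← hswap]
    simp only [hGdef] at h1 h2
    linarith
  -- normalization on the left
  have lhs_le : ∑ t ∈ Finset.Icc 1 T, ∑ i, (μ (t + 1) i / ∑ k, μ (t + 1) k) * ℓ t i
      ≤ ∑ t ∈ Finset.Icc 1 T, ∑ i, (μ (t + 1) i * ℓ t i) / (κ * n) := by
    apply Finset.sum_le_sum
    intro t ht
    obtain ⟨ht1, ht2⟩ := Finset.mem_Icc.mp ht
    apply Finset.sum_le_sum
    intro i _
    have hm := hmem t ht1 ht2
    have hℓi := hℓ t ht1 ht2 i
    rw [div_mul_eq_mul_div]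
    exact div_le_div_of_nonneg_left (mul_nonneg (hm.1 i).1 hℓi.1) hκn hm.2
  -- algebraic identities for the division by lam * κ * n
  have hlamκn : lam * κ * (n:ℝ) = lam * (κ * n) := by ring
  have eqL : ∑ t ∈ Finset.Icc 1 T, ∑ i, (μ (t + 1) i * ℓ t i) / (κ * n)
      = (lam * ∑ t ∈ Finset.Icc 1 T, (∑ i, μ (t+1) i * ℓ t i)) / (lam * κ * n) := by
    rw [hlamκn, mul_div_mul_left _ _ hlam0.ne']
    simp_rw [← Finset.sum_div]
  have hterm : ∀ (t : ℕ) (i : Fin n), ν' i * ℓ t i / (κ * ↑n)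
      = ν i / (∑ k, ν k) * ℓ t i := by
    intro t i
    show c * ν i * ℓ t i / (κ * ↑n) = _
    rw [hcdef]
    field_simp
  have eqR : (KLdiv ν μ₁ + lam * ∑ t ∈ Finset.Icc 1 T, ∑ i, ν' i * ℓ t i) / (lam * κ * n)
      = (∑ t ∈ Finset.Icc 1 T, ∑ i, (ν i / ∑ k, ν k) * ℓ t i)
        + KLdiv ν μ₁ / (lam * κ * n) := by
    rw [add_div, add_comm]
    congr 1
    rw [hlamκn, mul_div_mul_left _ _ hlam0.ne']
    simp_rw [Finset.sum_div, hterm]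
  calc ∑ t ∈ Finset.Icc 1 T, ∑ i, (μ (t + 1) i / ∑ k, μ (t + 1) k) * ℓ t i
      ≤ ∑ t ∈ Finset.Icc 1 T, ∑ i, (μ (t + 1) i * ℓ t i) / (κ * n) := lhs_le
    _ = (lam * ∑ t ∈ Finset.Icc 1 T, (∑ i, μ (t+1) i * ℓ t i)) / (lam * κ * n) := eqL
    _ ≤ (KLdiv ν μ₁ + lam * ∑ t ∈ Finset.Icc 1 T, ∑ i, ν' i * ℓ t i) / (lam * κ * n) :=
        div_le_div_of_nonneg_right main hlκn.le
    _ = _ := eqR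
end

section
/- Let κ, λ ∈ (0,1), let Γ be the set of bounded measures on [n] of density at least κ, let μ₁(i) = κ for all i, and let ℓ₁,…,ℓ_{T+1} : [n] → [0,1] be loss vectors. For each t define μ_t = Π_Γ( i ↦ e^{−λ·Σ_{s<t} ℓ_s(i)}·μ₁(i) ). Then ‖μ_T − μ_{T+1}‖₁ = Σᵢ|μ_T(i) − μ_{T+1}(i)| ≤ λκn, and consequently M(μ̂_T, ℓ_T) − M(μ̂_{T+1}, ℓ_T) ≤ λ, where M(μ̂, ℓ) = Σᵢ μ̂(i)·ℓ(i). -/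
/-!
Write `x = μ_T`, `y = μ_{T+1}` for the projections of the lazy weights `b₁`, `b₂`, so that
`log b₁ - log b₂ = λ ℓ_T`. Each projection lies above its weight (the weights are `≤ κ`) and has
mass exactly `κ n`. The midpoint `m` of `x` and `y` lies in `Γ`; comparing `KL(x‖b₁)` with
`KL(m‖b₁)` and `KL(y‖b₂)` with `KL(m‖b₂)` gives, by a three-point identity and `Σᵢ (xᵢ - yᵢ) = 0`,
`KL(x‖m) + KL(y‖m) ≤ (λ/2) Σᵢ (xᵢ - yᵢ) ℓ_T(i) ≤ (λ/4) ‖x - y‖₁`.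
Conversely, `t² ≤ klFun (1 + t) + klFun (1 - t)` and Cauchy–Schwarz give
`‖x - y‖₁² ≤ 4κn (KL(x‖m) + KL(y‖m))`, hence `‖x - y‖₁ ≤ λκn`. Both normalizations equal `κn`,
so the loss difference is `Σᵢ (xᵢ - yᵢ) ℓ_T(i) / (κn) ≤ ‖x - y‖₁ / (κn) ≤ λ`.
-/

open Real Finset InformationTheory

lemma hasDerivAt_klFun_one_add_add_klFun_one_sub {s : ℝ} (hs : |s| < 1) :
    HasDerivAt (fun s => klFun (1 + s) + klFun (1 - s)) (log (1 + s) - log (1 - s)) s := by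
  obtain ⟨h1, h2⟩ := abs_lt.1 hs
  have hp := (hasDerivAt_klFun (by linarith : 1 + s ≠ 0)).comp s ((hasDerivAt_id s).const_add 1)
  have hm := (hasDerivAt_klFun (by linarith : 1 - s ≠ 0)).comp s ((hasDerivAt_id s).const_sub 1)
  exact (hp.add hm).congr_deriv (by ring)

lemma two_mul_le_log_one_add_sub_log_one_sub {t : ℝ} (h0 : 0 ≤ t) (h1 : t < 1) :
    2 * t ≤ log (1 + t) - log (1 - t) := by
  have hpos : 0 < 1 - t := by linarith
  have h := le_log_one_add_of_nonneg (x := 2 * t / (1 - t)) (by positivity)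
  rw [← log_div (by linarith) hpos.ne']
  convert h using 2 <;> field_simp <;> ring

lemma sq_le_klFun_one_add_add_klFun_one_sub {t : ℝ} (ht : |t| < 1) :
    t ^ 2 ≤ klFun (1 + t) + klFun (1 - t) := by
  wlog h0 : 0 ≤ t generalizing t
  · simpa [add_comm, ← sub_eq_neg_add] using this (t := -t) (by rwa [abs_neg]) (by linarith)
  have hmono : MonotoneOn (fun s => klFun (1 + s) + klFun (1 - s) - s ^ 2) (Set.Ico 0 1) := by
    refine monotoneOn_of_hasDerivWithinAt_nonneg (convex_Ico 0 1) (by fun_prop)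
      (f' := fun s => log (1 + s) - log (1 - s) - 2 * s) (fun s hs => ?_) (fun s hs => ?_) <;>
      rw [interior_Ico] at hs
    · have habs : |s| < 1 := abs_lt.2 ⟨by linarith [hs.1], hs.2⟩
      exact (((hasDerivAt_klFun_one_add_add_klFun_one_sub habs).sub
        (by simpa using hasDerivAt_pow 2 s)).hasDerivWithinAt).congr_deriv (by ring)
    · linarith [two_mul_le_log_one_add_sub_log_one_sub hs.1.le hs.2]
  have := hmono ⟨le_rfl, one_pos⟩ ⟨h0, (abs_lt.1 ht).2⟩ h0
  simp only [add_zero, sub_zero, klFun_one] at this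
  linarith

lemma sq_sub_div_le_klFun_midpoint {x y : ℝ} (hx : 0 < x) (hy : 0 < y) :
    (x - y) ^ 2 / (2 * (x + y)) ≤
      (x + y) / 2 * klFun (x / ((x + y) / 2)) + (x + y) / 2 * klFun (y / ((x + y) / 2)) := by
  have hxy : 0 < x + y := by linarith
  have ht : |(x - y) / (x + y)| < 1 := by
    rw [abs_div, abs_of_pos hxy, div_lt_one hxy, abs_sub_lt_iff]
    constructor <;> linarith
  have e₁ : x / ((x + y) / 2) = 1 + (x - y) / (x + y) := by field_simp; ring
  have e₂ : y / ((x + y) / 2) = 1 - (x - y) / (x + y) := by field_simp; ring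
  rw [e₁, e₂, ← mul_add]
  calc (x - y) ^ 2 / (2 * (x + y)) = (x + y) / 2 * ((x - y) / (x + y)) ^ 2 := by
        field_simp
    _ ≤ _ := mul_le_mul_of_nonneg_left (sq_le_klFun_one_add_add_klFun_one_sub ht) (by positivity)

lemma mul_klFun_div {b : ℝ} (hb : b ≠ 0) (v : ℝ) :
    b * klFun (v / b) = v * log (v / b) + b - v := by
  rw [klFun_apply]
  field_simp

lemma mul_klFun_div_nonneg {v b : ℝ} (hv : 0 ≤ v) (hb : 0 < b) : 0 ≤ b * klFun (v / b) :=
  mul_nonneg hb.le (klFun_nonneg (div_nonneg hv hb.le))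

lemma mul_klFun_div_pos {v b : ℝ} (hv : 0 ≤ v) (hb : 0 < b) (hne : v ≠ b) :
    0 < b * klFun (v / b) := by
  refine mul_pos hb ((klFun_nonneg (div_nonneg hv hb.le)).lt_of_ne' ?_)
  rwa [ne_eq, klFun_eq_zero_iff (div_nonneg hv hb.le), div_eq_one_iff_eq hb.ne']

section KLdiv

variable {n : ℕ}

lemma KLdiv_eq_sum_mul_klFun {ν b : Fin n → ℝ} (hb : ∀ i, b i ≠ 0) :
    KLdiv ν b = ∑ i, b i * klFun (ν i / b i) := by
  simp only [KLdiv, mul_klFun_div (hb _)]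

lemma KLdiv_pos_of_ne {ν b : Fin n → ℝ} (hν : ∀ i, 0 ≤ ν i) (hb : ∀ i, 0 < b i)
    (hne : ν ≠ b) : 0 < KLdiv ν b := by
  obtain ⟨i, hi⟩ := Function.ne_iff.1 hne
  rw [KLdiv_eq_sum_mul_klFun fun i => (hb i).ne']
  exact sum_pos' (fun j _ => mul_klFun_div_nonneg (hν j) (hb j))
    ⟨i, mem_univ i, mul_klFun_div_pos (hν i) (hb i) hi⟩

lemma KLdiv_mix_base_le {ν b : Fin n → ℝ} (hν : ∀ i, 0 ≤ ν i) (hb : ∀ i, 0 < b i)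
    {θ : ℝ} (hθ₀ : 0 ≤ θ) (hθ₁ : θ ≤ 1) :
    KLdiv (fun i => θ * b i + (1 - θ) * ν i) b ≤ (1 - θ) * KLdiv ν b := by
  simp only [KLdiv_eq_sum_mul_klFun fun i => (hb i).ne', mul_sum]
  refine sum_le_sum fun i _ => ?_
  have hmix : (θ * b i + (1 - θ) * ν i) / b i = θ • 1 + (1 - θ) • (ν i / b i) := by
    simp only [smul_eq_mul]
    field_simp [(hb i).ne']
  have hconv := convexOn_klFun.2 (Set.mem_Ici.2 zero_le_one)
    (Set.mem_Ici.2 (div_nonneg (hν i) (hb i).le)) hθ₀ (sub_nonneg.2 hθ₁) (add_sub_cancel θ 1)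
  rw [hmix]
  calc b i * klFun (θ • 1 + (1 - θ) • (ν i / b i))
      ≤ b i * ((1 - θ) * klFun (ν i / b i)) :=
        mul_le_mul_of_nonneg_left (by simpa [klFun_one] using hconv) (hb i).le
    _ = (1 - θ) * (b i * klFun (ν i / b i)) := by ring

lemma sq_sum_abs_sub_le_KLdiv_midpoint {x y : Fin n → ℝ} (hx : ∀ i, 0 < x i)
    (hy : ∀ i, 0 < y i) :
    (∑ i, |x i - y i|) ^ 2 ≤ 2 * (∑ i, x i + ∑ i, y i) *
      (KLdiv x (fun i => (x i + y i) / 2) + KLdiv y (fun i => (x i + y i) / 2)) := by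
  have hxy : ∀ i, 0 < x i + y i := fun i => add_pos (hx i) (hy i)
  have hm : ∀ i, (x i + y i) / 2 ≠ 0 := fun i => (half_pos (hxy i)).ne'
  rw [KLdiv_eq_sum_mul_klFun hm, KLdiv_eq_sum_mul_klFun hm, ← sum_add_distrib, mul_comm,
    ← sum_add_distrib, mul_sum]
  calc (∑ i, |x i - y i|) ^ 2
      ≤ (∑ i, (x i - y i) ^ 2 / (2 * (x i + y i))) * ∑ i, 2 * (x i + y i) :=
        sum_sq_le_sum_mul_sum_of_sq_le_mul _ (fun i _ => by have := hxy i; positivity)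
          (fun i _ => by linarith [hxy i]) (fun i _ => by
            rw [sq_abs, div_mul_cancel₀ _ (by linarith [hxy i])])
    _ ≤ _ := mul_le_mul_of_nonneg_right
        (sum_le_sum fun i _ => sq_sub_div_le_klFun_midpoint (hx i) (hy i))
        (sum_nonneg fun i _ => by linarith [hxy i])

end KLdiv

lemma sum_mul_le_half_sum_abs {ι : Type*} [Fintype ι] {d ℓ : ι → ℝ} (hd : ∑ i, d i = 0)
    (hℓ : ∀ i, ℓ i ∈ Set.Icc 0 1) : ∑ i, d i * ℓ i ≤ (∑ i, |d i|) / 2 := by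
  calc ∑ i, d i * ℓ i ≤ ∑ i, (d i + |d i|) / 2 := sum_le_sum fun i _ => ?_
    _ = (∑ i, |d i|) / 2 := by rw [← sum_div, sum_add_distrib, hd, zero_add]
  rcases le_total 0 (d i) with h | h
  · rw [abs_of_nonneg h]; nlinarith [(hℓ i).2]
  · rw [abs_of_nonpos h]; nlinarith [(hℓ i).1]

lemma sum_div_mul_sub_sum_div_mul_le {ι : Type*} [Fintype ι] {x y ℓ : ι → ℝ} {M lam : ℝ}
    (hM : 0 ≤ M) (hlam : 0 ≤ lam) (hℓ : ∀ i, ℓ i ∈ Set.Icc 0 1)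
    (h : ∑ i, |x i - y i| ≤ lam * M) :
    ∑ i, x i / M * ℓ i - ∑ i, y i / M * ℓ i ≤ lam := by
  have hdiff : ∑ i, x i / M * ℓ i - ∑ i, y i / M * ℓ i = (∑ i, (x i - y i) * ℓ i) / M := by
    rw [← sum_sub_distrib, sum_div]
    exact sum_congr rfl fun i _ => by ring
  rw [hdiff]
  refine div_le_of_le_mul₀ hM hlam ((sum_le_sum fun i _ => ?_).trans h)
  calc (x i - y i) * ℓ i ≤ |(x i - y i) * ℓ i| := le_abs_self _
    _ = |x i - y i| * ℓ i := by rw [abs_mul, abs_of_nonneg (hℓ i).1]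
    _ ≤ |x i - y i| := mul_le_of_le_one_right (abs_nonneg _) (hℓ i).2

lemma exp_neg_mul_mul_mem_Ioc {lam L κ : ℝ} (hlam : 0 ≤ lam) (hL : 0 ≤ L) (hκ : 0 < κ) :
    exp (-lam * L) * κ ∈ Set.Ioc 0 κ :=
  ⟨by positivity, mul_le_of_le_one_left hκ.le (exp_le_one_iff.2 (by nlinarith))⟩

namespace IsBregmanProj

variable {n : ℕ} {κ : ℝ}

lemma base_le {b ν : Fin n → ℝ} (hb : ∀ i, b i ∈ Set.Ioc 0 1) (h : IsBregmanProj κ b ν) :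
    b ≤ ν := by
  by_contra hle
  obtain ⟨i, hi⟩ : ∃ i, ν i < b i := by simpa [Pi.le_def] using hle
  obtain ⟨⟨hbdd, hmass⟩, hmin⟩ := h
  have hsup_bdd : IsBddMeasure (ν ⊔ b) := fun j =>
    ⟨(hbdd j).1.trans le_sup_left, sup_le (hbdd j).2 (hb j).2⟩
  have hsup_mass : κ * n ≤ ∑ j, (ν ⊔ b) j := hmass.trans (sum_le_sum fun j _ => le_sup_left)
  have hsup_self : ∀ j, ν j ≤ b j → b j * klFun ((ν ⊔ b) j / b j) = 0 := fun j hj => by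
    rw [Pi.sup_apply, sup_eq_right.2 hj, div_self (hb j).1.ne', klFun_one, mul_zero]
  have hlt : KLdiv (ν ⊔ b) b < KLdiv ν b := by
    simp only [KLdiv_eq_sum_mul_klFun fun j => (hb j).1.ne']
    refine sum_lt_sum (fun j _ => ?_) ⟨i, mem_univ i, ?_⟩
    · rcases le_total (b j) (ν j) with hj | hj
      · rw [Pi.sup_apply, sup_eq_left.2 hj]
      · exact (hsup_self j hj).trans_le (mul_klFun_div_nonneg (hbdd j).1 (hb j).1)
    · exact (hsup_self i hi.le).trans_lt (mul_klFun_div_pos (hbdd i).1 (hb i).1 hi.ne)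
  exact (hmin _ hsup_bdd hsup_mass).not_gt hlt

lemma sum_eq {b ν : Fin n → ℝ} (hb : ∀ i, b i ∈ Set.Ioc 0 1) (hsum : ∑ i, b i ≤ κ * n)
    (h : IsBregmanProj κ b ν) : ∑ i, ν i = κ * n := by
  obtain ⟨⟨hbdd, hmass⟩, hmin⟩ := h
  refine (hmass.lt_or_eq.resolve_left fun hlt => ?_).symm
  -- `θ` makes the mixture `ρ` have mass exactly `κ n`, and `KL(ρ‖b) ≤ (1 - θ) KL(ν‖b) < KL(ν‖b)`
  have hgap : 0 < ∑ i, ν i - ∑ i, b i := by linarith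
  set θ := (∑ i, ν i - κ * n) / (∑ i, ν i - ∑ i, b i)
  have hθ₀ : 0 < θ := div_pos (by linarith) hgap
  have hθ₁ : θ ≤ 1 := (div_le_one hgap).2 (by linarith)
  set ρ : Fin n → ℝ := fun i => θ * b i + (1 - θ) * ν i
  have hρ_bdd : IsBddMeasure ρ := fun i =>
    convex_Icc (0 : ℝ) 1 (Set.Ioc_subset_Icc_self (hb i)) (hbdd i) hθ₀.le (sub_nonneg.2 hθ₁)
      (add_sub_cancel θ 1)
  have hρ_mass : ∑ i, ρ i = κ * n := by
    simp only [ρ, sum_add_distrib, ← mul_sum, θ]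
    field_simp
    ring
  have hpos : 0 < KLdiv ν b :=
    KLdiv_pos_of_ne (fun i => (hbdd i).1) (fun i => (hb i).1) (by rintro rfl; linarith)
  have hmix := KLdiv_mix_base_le (fun i => (hbdd i).1) (fun i => (hb i).1) hθ₀.le hθ₁
  nlinarith [hmin ρ hρ_bdd hρ_mass.ge]

lemma KLdiv_midpoint_add_le {b₁ b₂ x y : Fin n → ℝ} (hb₁ : ∀ i, 0 < b₁ i)
    (hb₂ : ∀ i, 0 < b₂ i) (hx : ∀ i, 0 < x i) (hy : ∀ i, 0 < y i)
    (h₁ : IsBregmanProj κ b₁ x) (h₂ : IsBregmanProj κ b₂ y) :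
    KLdiv x (fun i => (x i + y i) / 2) + KLdiv y (fun i => (x i + y i) / 2) ≤
      (∑ i, (x i - y i) * (log (b₁ i) - log (b₂ i))) / 2 := by
  set m : Fin n → ℝ := fun i => (x i + y i) / 2
  have hm_bdd : IsBddMeasure m := fun i => by
    obtain ⟨⟨hx₀, hx₁⟩, ⟨hy₀, hy₁⟩⟩ := And.intro (h₁.1.1 i) (h₂.1.1 i)
    constructor <;> simp only [m] <;> linarith
  have hm_mass : κ * n ≤ ∑ i, m i := by
    simp only [m, ← sum_div, sum_add_distrib]
    linarith [h₁.1.2, h₂.1.2]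
  have hmin₁ := h₁.2 m hm_bdd hm_mass
  have hmin₂ := h₂.2 m hm_bdd hm_mass
  have hthree_point :
      KLdiv x m + KLdiv y m + (KLdiv m b₁ - KLdiv x b₁) + (KLdiv m b₂ - KLdiv y b₂) =
      (∑ i, (x i - y i) * (log (b₁ i) - log (b₂ i))) / 2 := by
    simp only [KLdiv, ← sum_add_distrib, ← sum_sub_distrib, sum_div]
    refine sum_congr rfl fun i _ => ?_
    have hm : m i ≠ 0 := by simp only [m]; linarith [hx i, hy i]
    rw [log_div (hx i).ne' hm, log_div (hy i).ne' hm, log_div hm (hb₁ i).ne',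
      log_div (hx i).ne' (hb₁ i).ne', log_div hm (hb₂ i).ne', log_div (hy i).ne' (hb₂ i).ne']
    simp only [m]
    ring
  linarith

lemma pos_and_sum_eq_of_le {b ν : Fin n → ℝ} (hκ : κ ≤ 1) (hb : ∀ i, b i ∈ Set.Ioc 0 κ)
    (h : IsBregmanProj κ b ν) : (∀ i, 0 < ν i) ∧ ∑ i, ν i = κ * n := by
  have hb₁ : ∀ i, b i ∈ Set.Ioc 0 1 := fun i => ⟨(hb i).1, (hb i).2.trans hκ⟩
  refine ⟨fun i => (hb i).1.trans_le (h.base_le hb₁ i), h.sum_eq hb₁ ?_⟩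
  calc ∑ i, b i ≤ ∑ _i : Fin n, κ := sum_le_sum fun i _ => (hb i).2
    _ = κ * n := by simp [mul_comm]

lemma sum_abs_sub_le {lam M : ℝ} {b₁ b₂ x y ℓ : Fin n → ℝ}
    (hb₁ : ∀ i, 0 < b₁ i) (hb₂ : ∀ i, 0 < b₂ i) (hx : ∀ i, 0 < x i) (hy : ∀ i, 0 < y i)
    (hsx : ∑ i, x i = M) (hsy : ∑ i, y i = M) (hlam : 0 ≤ lam) (hℓ : ∀ i, ℓ i ∈ Set.Icc 0 1)
    (hlog : ∀ i, log (b₁ i) - log (b₂ i) = lam * ℓ i)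
    (h₁ : IsBregmanProj κ b₁ x) (h₂ : IsBregmanProj κ b₂ y) :
    ∑ i, |x i - y i| ≤ lam * M := by
  set S := ∑ i, |x i - y i|
  have hM : 0 ≤ M := hsx ▸ sum_nonneg fun i _ => (hx i).le
  have hS : 0 ≤ S := sum_nonneg fun i _ => abs_nonneg _
  have hdl : ∑ i, (x i - y i) * ℓ i ≤ S / 2 :=
    sum_mul_le_half_sum_abs (by rw [sum_sub_distrib, hsx, hsy, sub_self]) hℓ
  have hstab := h₁.KLdiv_midpoint_add_le hb₁ hb₂ hx hy h₂
  have hpinsker := sq_sum_abs_sub_le_KLdiv_midpoint hx hy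
  simp only [hlog, mul_left_comm _ lam, ← mul_sum] at hstab
  rw [hsx, hsy] at hpinsker
  have hsq : S ^ 2 ≤ lam * M * S := by
    calc S ^ 2 ≤ 2 * (M + M) * (lam * (∑ i, (x i - y i) * ℓ i) / 2) :=
          hpinsker.trans (mul_le_mul_of_nonneg_left hstab (by positivity))
      _ ≤ 2 * (M + M) * (lam * (S / 2) / 2) := by gcongr
      _ = lam * M * S := by ring
  nlinarith [mul_nonneg hlam hM]

end IsBregmanProj

theorem lazy_dense_consecutive_stability_general {n : ℕ} (T : ℕ) (hT : 1 ≤ T)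
    (κ lam : ℝ) (hκ : κ ∈ Set.Ioo (0:ℝ) 1) (hlam : lam ∈ Set.Ioo (0:ℝ) 1)
    (μ₁ : Fin n → ℝ) (hμ₁ : ∀ i, μ₁ i = κ)
    (ℓ : ℕ → Fin n → ℝ)
    (hℓ : ∀ t, 1 ≤ t → t ≤ T + 1 → ∀ i, ℓ t i ∈ Set.Icc (0:ℝ) 1)
    (μ : ℕ → Fin n → ℝ)
    (hproj : ∀ t, 1 ≤ t → t ≤ T + 1 →
      IsBregmanProj κ
        (fun i => Real.exp (-lam * ∑ s ∈ Finset.Ico 1 t, ℓ s i) * μ₁ i) (μ t)) :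
    (∑ i, |μ T i - μ (T + 1) i| ≤ lam * κ * n) ∧
      (∑ i, (μ T i / ∑ k, μ T k) * ℓ T i)
          - (∑ i, (μ (T + 1) i / ∑ k, μ (T + 1) k) * ℓ T i) ≤ lam := by
  obtain ⟨hκ₀, hκ₁⟩ := hκ
  have hlam₀ : 0 ≤ lam := hlam.1.le
  simp only [hμ₁] at hproj
  have hweight : ∀ t ≤ T + 1, ∀ i, exp (-lam * ∑ s ∈ Ico 1 t, ℓ s i) * κ ∈ Set.Ioc 0 κ :=
    fun t ht i => exp_neg_mul_mul_mem_Ioc hlam₀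
      (sum_nonneg fun s hs => (hℓ s (mem_Ico.1 hs).1 (by grind) i).1) hκ₀
  have hP₁ := hproj T hT (by omega)
  have hP₂ := hproj (T + 1) (by omega) le_rfl
  obtain ⟨hx, hsx⟩ := hP₁.pos_and_sum_eq_of_le hκ₁.le (hweight T (by omega))
  obtain ⟨hy, hsy⟩ := hP₂.pos_and_sum_eq_of_le hκ₁.le (hweight (T + 1) le_rfl)
  have hℓT := hℓ T hT (by omega)
  have hdist := hP₁.sum_abs_sub_le (fun i => (hweight T (by omega) i).1)
    (fun i => (hweight (T + 1) le_rfl i).1) hx hy hsx hsy hlam₀ hℓT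
    (fun i => by
      rw [log_mul (exp_ne_zero _) hκ₀.ne', log_mul (exp_ne_zero _) hκ₀.ne', log_exp, log_exp,
        sum_Ico_succ_top hT]
      ring)
    hP₂
  refine ⟨(mul_assoc lam κ n).symm ▸ hdist, ?_⟩
  rw [hsx, hsy]
  exact sum_div_mul_sub_sum_div_mul_le (by positivity) hlam₀ hℓT hdist

/-- **Stability of consecutive lazy dense updates.**  With
`μ_t = Π_Γ(e^{−λΣ_{s<t} ℓ_s}·μ₁)`, consecutive measures satisfy
`‖μ_T − μ_{T+1}‖₁ ≤ λκn`, and hence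
`M(μ̂_T, ℓ_T) − M(μ̂_{T+1}, ℓ_T) ≤ λ`. -/
theorem lazy_dense_consecutive_stability {n : ℕ} (hn : 0 < n) (T : ℕ) (hT : 1 ≤ T)
    (κ lam : ℝ) (hκ : κ ∈ Set.Ioo (0:ℝ) 1) (hlam : lam ∈ Set.Ioo (0:ℝ) 1)
    (μ₁ : Fin n → ℝ) (hμ₁ : ∀ i, μ₁ i = κ)
    (ℓ : ℕ → Fin n → ℝ)
    (hℓ : ∀ t, 1 ≤ t → t ≤ T + 1 → ∀ i, ℓ t i ∈ Set.Icc (0:ℝ) 1)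
    (μ : ℕ → Fin n → ℝ)
    (hproj : ∀ t, 1 ≤ t → t ≤ T + 1 →
      IsBregmanProj κ
        (fun i => Real.exp (-lam * ∑ s ∈ Finset.Ico 1 t, ℓ s i) * μ₁ i) (μ t)) :
    (∑ i, |μ T i - μ (T + 1) i| ≤ lam * κ * n) ∧
      (∑ i, (μ T i / ∑ k, μ T k) * ℓ T i)
          - (∑ i, (μ (T + 1) i / ∑ k, μ (T + 1) k) * ℓ T i) ≤ lam :=
  lazy_dense_consecutive_stability_general T hT κ lam hκ hlam μ₁ hμ₁ ℓ hℓ μ hproj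
end

section
/- Let κ, λ ∈ (0,1), let Γ be the set of bounded measures on [n] of density at least κ, let μ₁(i) = κ for all i, and let ℓ₁,…,ℓ_T : [n] → [0,1] be loss vectors. For each t define μ_t = Π_Γ( i ↦ e^{−λ·Σ_{s<t} ℓ_s(i)}·μ₁(i) ) (so μ₁ is the uniform κ measure). Then for every μ ∈ Γ, (1/T)·Σ_{t=1}^T M(μ̂_t, ℓ_t) ≤ (1/T)·Σ_{t=1}^T M(μ̂, ℓ_t) + λ + KL(μ‖μ₁)/(λκnT), where M(μ̂, ℓ) = Σᵢ μ̂(i)·ℓ(i). -/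
open Real Finset

noncomputable def klTerm (x y : ℝ) : ℝ := x * log (x / y) + y - x

lemma KLdiv_eq_sum_klTerm {n : ℕ} (μ ν : Fin n → ℝ) :
    KLdiv μ ν = ∑ i, klTerm (μ i) (ν i) := rfl

@[simp] lemma klTerm_zero_left (y : ℝ) : klTerm 0 y = y := by simp [klTerm]

@[simp] lemma klTerm_self {y : ℝ} (hy : y ≠ 0) : klTerm y y = 0 := by simp [klTerm, hy]

lemma klTerm_nonneg {x y : ℝ} (hx : 0 ≤ x) (hy : 0 < y) : 0 ≤ klTerm x y := by
  rcases hx.eq_or_lt with rfl | hx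
  · simpa using hy.le
  have := mul_le_mul_of_nonneg_left (one_sub_inv_le_log_of_pos (div_pos hx hy)) hx.le
  rw [inv_div, mul_sub, mul_div_cancel₀ _ hx.ne', mul_one] at this
  unfold klTerm
  linarith

lemma klTerm_le_sq_div {x y : ℝ} (hx : 0 ≤ x) (hy : 0 < y) : klTerm x y ≤ (x - y) ^ 2 / y := by
  rcases hx.eq_or_lt with rfl | hx
  · simp [sq, hy.ne']
  have := mul_le_mul_of_nonneg_left (log_le_sub_one_of_pos (div_pos hx hy)) hx.le
  have hsq : (x - y) ^ 2 / y = x * (x / y - 1) + y - x := by field_simp; ring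
  rw [hsq]
  unfold klTerm
  linarith

lemma sub_inv_div_two_le_log {t : ℝ} (ht : 0 < t) (ht1 : t ≤ 1) : (t - t⁻¹) / 2 ≤ log t := by
  rw [← sinh_log ht]
  exact sinh_le_self_iff.2 (log_nonpos ht.le ht1)

lemma sq_sub_le_two_mul_add_mul_klTerm {x y : ℝ} (hx : 0 ≤ x) (hy : 0 < y) :
    (x - y) ^ 2 ≤ 2 * (x + y) * klTerm x y := by
  unfold klTerm
  rcases le_total x y with hxy | hyx
  · rcases hx.eq_or_lt with rfl | hx
    · nlinarith
    have hlog := mul_le_mul_of_nonneg_left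
      (sub_inv_div_two_le_log (div_pos hx hy) ((div_le_one hy).2 hxy)) hx.le
    have h : x * ((x / y - (x / y)⁻¹) / 2) = (x ^ 2 / y - y) / 2 := by field_simp
    rw [h] at hlog
    have hxy2 : (x - y) ^ 2 ≤ (x + y) * ((x - y) ^ 2 / y) := by
      rw [mul_div_assoc']
      exact (le_div_iff₀ hy).2 (by nlinarith [sq_nonneg (x - y)])
    have h2 : (x - y) ^ 2 / y = 2 * ((x ^ 2 / y - y) / 2 + y - x) := by field_simp; ring
    nlinarith
  · have hlog := le_log_one_add_of_nonneg (sub_nonneg.2 ((one_le_div hy).2 hyx))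
    rw [add_sub_cancel] at hlog
    have h : 2 * (x / y - 1) / (x / y - 1 + 2) = 2 * (x - y) / (x + y) := by
      field_simp; ring
    rw [h, div_le_iff₀ (by linarith)] at hlog
    nlinarith [mul_le_mul_of_nonneg_left hlog hx]

lemma klTerm_lt_klTerm {c x y : ℝ} (hy : 0 < y) (hyc : y ≤ c) (hcx : c < x) :
    klTerm c y < klTerm x y := by
  have hc : 0 < c := hy.trans_le hyc
  have hx : 0 < x := hc.trans hcx
  have hlt := mul_lt_mul_of_pos_left
    (log_lt_sub_one_of_pos (div_pos hc hx) (div_lt_one hx |>.2 hcx).ne) hx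
  have hsplit : log (x / y) = log (c / y) - log (c / x) := by
    rw [log_div hc.ne' hy.ne', log_div hc.ne' hx.ne', log_div hx.ne' hy.ne']; ring
  have hcy : 0 ≤ (x - c) * log (c / y) :=
    mul_nonneg (sub_nonneg.2 hcx.le) (log_nonneg ((one_le_div hy).2 hyc))
  rw [mul_sub, mul_div_cancel₀ _ hx.ne', mul_one] at hlt
  unfold klTerm
  rw [hsplit]
  nlinarith

lemma Fintype.sum_apply_update_sub {ι α M : Type*} [Fintype ι] [DecidableEq ι] [AddCommGroup M]
    (g : ι → α → M) (x : ι → α) (i : ι) (c : α) :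
    ∑ j, g j (Function.update x i c j) - ∑ j, g j (x j) = g i c - g i (x i) := by
  rw [← sum_sub_distrib, sum_eq_single i fun j hj => by simp [hj]]
  simp

section KLdiv

variable {n : ℕ}

lemma KLdiv_nonneg_s13 {μ ν : Fin n → ℝ} (hμ : ∀ i, 0 ≤ μ i) (hν : ∀ i, 0 < ν i) :
    0 ≤ KLdiv μ ν :=
  sum_nonneg fun i _ => klTerm_nonneg (hμ i) (hν i)

lemma KLdiv_update_sub (x m : Fin n → ℝ) (i : Fin n) (c : ℝ) :
    KLdiv (Function.update x i c) m - KLdiv x m = klTerm c (m i) - klTerm (x i) (m i) :=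
  Fintype.sum_apply_update_sub (fun j a => klTerm a (m j)) x i c

lemma KLdiv_le_sum_sq_div {μ ν : Fin n → ℝ} (hμ : ∀ i, 0 ≤ μ i) (hν : ∀ i, 0 < ν i) :
    KLdiv μ ν ≤ ∑ i, (μ i - ν i) ^ 2 / ν i :=
  sum_le_sum fun i _ => klTerm_le_sq_div (hμ i) (hν i)

/-- Pinsker's inequality, in a form that does not need equal masses. -/
lemma sq_sum_abs_sub_le_KLdiv {μ ν : Fin n → ℝ} (hμ : ∀ i, 0 ≤ μ i) (hν : ∀ i, 0 < ν i) :
    (∑ i, |μ i - ν i|) ^ 2 ≤ 2 * (∑ i, (μ i + ν i)) * KLdiv μ ν := by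
  have h := sum_sq_le_sum_mul_sum_of_sq_le_mul univ (r := fun i => |μ i - ν i|)
    (f := fun i => μ i + ν i) (g := fun i => 2 * klTerm (μ i) (ν i))
    (fun i _ => by linarith [hμ i, hν i])
    (fun i _ => by linarith [klTerm_nonneg (hμ i) (hν i)]) fun i _ => by
      rw [sq_abs, ← mul_assoc, mul_comm _ (2 : ℝ)]
      exact sq_sub_le_two_mul_add_mul_klTerm (hμ i) (hν i)
  rwa [← mul_sum, mul_left_comm, ← mul_assoc] at h

lemma KLdiv_eq_add_add_sum_mul_log {ρ x m : Fin n → ℝ} (hx : ∀ i, x i ≠ 0) (hm : ∀ i, m i ≠ 0) :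
    KLdiv ρ m = KLdiv x m + KLdiv ρ x + ∑ i, (ρ i - x i) * log (x i / m i) := by
  unfold KLdiv
  rw [← sum_add_distrib, ← sum_add_distrib]
  refine sum_congr rfl fun i _ => ?_
  rcases eq_or_ne (ρ i) 0 with h | h
  · simp only [h, zero_div, log_zero, mul_zero, zero_sub]
    ring
  · rw [log_div h (hm i), log_div h (hx i), log_div (hx i) (hm i)]
    ring

lemma KLdiv_const_mul_left {c : ℝ} (hc : c ≠ 0) {ν m : Fin n → ℝ} (hm : ∀ i, m i ≠ 0) :
    KLdiv (fun i => c * ν i) m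
      = c * KLdiv ν m + c * log c * ∑ i, ν i + (1 - c) * ∑ i, m i := by
  unfold KLdiv
  rw [mul_sum, mul_sum, mul_sum, ← sum_add_distrib, ← sum_add_distrib]
  refine sum_congr rfl fun i _ => ?_
  rcases eq_or_ne (ν i) 0 with h | h
  · simp only [h, mul_zero, zero_div, log_zero]
    ring
  · rw [mul_div_assoc, log_mul hc (div_ne_zero h (hm i))]
    ring

lemma KLdiv_const_mul_left_le {c : ℝ} (hc0 : 0 < c) (hc1 : c ≤ 1) {ν m : Fin n → ℝ}
    (hν : ∀ i, 0 ≤ ν i) (hm : ∀ i, 0 < m i) (hcν : c * ∑ i, ν i = ∑ i, m i) :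
    KLdiv (fun i => c * ν i) m ≤ KLdiv ν m := by
  rw [KLdiv_const_mul_left hc0.ne' fun i => (hm i).ne', mul_comm c (log c), mul_assoc, hcν]
  have hlog : log c + 1 - c ≤ 0 := by linarith [log_le_sub_one_of_pos hc0]
  have hKL : 0 ≤ (1 - c) * KLdiv ν m := mul_nonneg (by linarith) (KLdiv_nonneg_s13 hν hm)
  nlinarith [sum_nonneg fun i (_ : i ∈ univ) => (hm i).le]

lemma KLdiv_exp_mul_right {m : Fin n → ℝ} (hm : ∀ i, m i ≠ 0) (lam : ℝ) (L ρ : Fin n → ℝ) :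
    KLdiv ρ (fun i => exp (-lam * L i) * m i)
      = KLdiv ρ m + lam * ∑ i, ρ i * L i + ∑ i, (exp (-lam * L i) * m i - m i) := by
  unfold KLdiv
  rw [mul_sum, ← sum_add_distrib, ← sum_add_distrib]
  refine sum_congr rfl fun i _ => ?_
  rcases eq_or_ne (ρ i) 0 with h | h
  · simp only [h, zero_mul, mul_zero]
    ring
  · rw [log_div h (mul_ne_zero (exp_ne_zero _) (hm i)), log_div h (hm i),
      log_mul (exp_ne_zero _) (hm i), log_exp]
    ring

end KLdiv

section Projection

variable {n : ℕ}

lemma KLdiv_add_KLdiv_le_of_isMinOn {s : Set (Fin n → ℝ)} (hs : Convex ℝ s)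
    {m x ρ : Fin n → ℝ} (hm : ∀ i, 0 < m i) (hx : ∀ i, 0 < x i) (hxs : x ∈ s)
    (hmin : IsMinOn (KLdiv · m) s x) (hρs : ρ ∈ s) (hρ : ∀ i, 0 ≤ ρ i) :
    KLdiv x m + KLdiv ρ x ≤ KLdiv ρ m := by
  set D := ∑ i, (ρ i - x i) * log (x i / m i)
  set C := ∑ i, (ρ i - x i) ^ 2 / x i
  have three_point (σ : Fin n → ℝ) := KLdiv_eq_add_add_sum_mul_log (ρ := σ)
    (fun i => (hx i).ne') fun i => (hm i).ne'
  -- Along the segment from `x` to `ρ`, minimality gives `0 ≤ ε D + KL(z_ε‖x) ≤ ε D + ε² C`.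
  have hslope : ∀ ε ∈ Set.Ioc (0 : ℝ) 1, 0 ≤ ε * C + D := by
    rintro ε ⟨hε0, hε1⟩
    set z := x + ε • (ρ - x)
    have hz : ∀ i, z i = x i + ε * (ρ i - x i) := fun i => rfl
    have hz0 : ∀ i, 0 ≤ z i := fun i => by
      rw [hz]; nlinarith [hx i, hρ i]
    have hmin_z := isMinOn_iff.1 hmin z (hs.add_smul_sub_mem hxs hρs ⟨hε0.le, hε1⟩)
    have hKL : KLdiv z x ≤ ε ^ 2 * C := by
      refine (KLdiv_le_sum_sq_div hz0 hx).trans_eq ?_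
      simp only [C, hz, mul_sum]
      exact sum_congr rfl fun i _ => by ring
    have hlin : ∑ i, (z i - x i) * log (x i / m i) = ε * D := by
      simp only [D, hz, mul_sum]
      exact sum_congr rfl fun i _ => by ring
    rw [three_point z, hlin] at hmin_z
    nlinarith
  have hD : 0 ≤ D := by
    have hlim : Filter.Tendsto (fun ε : ℝ => ε * C + D) (nhdsWithin 0 (Set.Ioi 0)) (nhds D) := by
      have hcont : Continuous fun ε : ℝ => ε * C + D := by fun_prop
      simpa using (hcont.tendsto 0).mono_left nhdsWithin_le_nhds
    exact ge_of_tendsto hlim (Filter.eventually_of_mem (Ioc_mem_nhdsGT one_pos) hslope)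
  linarith [three_point ρ]

def denseMeasures (n : ℕ) (κ : ℝ) : Set (Fin n → ℝ) :=
  {ρ | IsBddMeasure ρ ∧ κ * n ≤ ∑ i, ρ i}

lemma convex_denseMeasures (κ : ℝ) : Convex ℝ (denseMeasures n κ) := by
  rintro x ⟨hx, hxs⟩ y ⟨hy, hys⟩ a b ha hb hab
  refine ⟨fun i => convex_Icc (0 : ℝ) 1 (hx i) (hy i) ha hb hab, ?_⟩
  simp only [Pi.add_apply, Pi.smul_apply, smul_eq_mul, sum_add_distrib, ← mul_sum]
  have hκn : κ * n = a * (κ * n) + b * (κ * n) := by rw [← add_mul, hab, one_mul]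
  linarith [mul_le_mul_of_nonneg_left hxs ha, mul_le_mul_of_nonneg_left hys hb]

lemma isBregmanProj_iff {κ : ℝ} {m x : Fin n → ℝ} :
    IsBregmanProj κ m x ↔
      x ∈ denseMeasures n κ ∧ IsMinOn (KLdiv · m) (denseMeasures n κ) x := by
  simp only [IsBregmanProj, isMinOn_iff, denseMeasures, Set.mem_ofPred_eq, and_imp]

lemma IsBddMeasure.update {x : Fin n → ℝ} (hx : IsBddMeasure x) (i : Fin n) {c : ℝ}
    (hc : c ∈ Set.Icc (0 : ℝ) 1) : IsBddMeasure (Function.update x i c) := by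
  intro j
  rcases eq_or_ne j i with rfl | hj
  · simpa using hc
  · simpa [hj] using hx j

namespace IsBregmanProj

variable {κ : ℝ} {m x : Fin n → ℝ}

lemma KLdiv_add_KLdiv_le (hx : IsBregmanProj κ m x) (hm : ∀ i, 0 < m i) (hxpos : ∀ i, 0 < x i)
    {ρ : Fin n → ℝ} (hρ : ρ ∈ denseMeasures n κ) :
    KLdiv x m + KLdiv ρ x ≤ KLdiv ρ m :=
  let ⟨hxΓ, hmin⟩ := isBregmanProj_iff.1 hx
  KLdiv_add_KLdiv_le_of_isMinOn (convex_denseMeasures κ) hm hxpos hxΓ hmin hρ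
    fun i => (hρ.1 i).1

/-- Raising a zero coordinate to `m i` would lower its term of the divergence from `m i` to `0`. -/
lemma pos (hx : IsBregmanProj κ m x) (hm : ∀ i, 0 < m i) (hm1 : ∀ i, m i ≤ 1) (i : Fin n) :
    0 < x i := by
  obtain ⟨⟨hbdd, hsum⟩, hmin⟩ := hx
  by_contra hxi
  have hxi0 : x i = 0 := le_antisymm (not_lt.1 hxi) (hbdd i).1
  have hsum' := Fintype.sum_apply_update_sub (fun _ a => a) x i (m i)
  have hKL := KLdiv_update_sub x m i (m i)
  have := hmin _ (hbdd.update i ⟨(hm i).le, hm1 i⟩) (by linarith [hm i])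
  rw [hxi0, klTerm_self (hm i).ne', klTerm_zero_left] at hKL
  linarith [hm i]

/-- Otherwise some coordinate exceeds `m i`, and lowering it towards `m i` stays in `Γ` and
lowers the divergence. -/
lemma sum_eq_s13 (hx : IsBregmanProj κ m x) (hm : ∀ i, 0 < m i) (hms : ∑ i, m i ≤ κ * n) :
    ∑ i, x i = κ * n := by
  obtain ⟨⟨hbdd, hsum⟩, hmin⟩ := hx
  refine le_antisymm (not_lt.1 fun hlt => ?_) hsum
  obtain ⟨i, -, hi⟩ := exists_lt_of_sum_lt (hms.trans_lt hlt)
  set c := max (m i) (x i - (∑ j, x j - κ * n))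
  have hc : c < x i := max_lt hi (by linarith)
  have hsum' := Fintype.sum_apply_update_sub (fun _ a => a) x i c
  have hKL := KLdiv_update_sub x m i c
  have := hmin _ (hbdd.update i ⟨(hm i).le.trans (le_max_left _ _), hc.le.trans (hbdd i).2⟩)
    (by linarith [le_max_right (m i) (x i - (∑ j, x j - κ * n))])
  linarith [klTerm_lt_klTerm (hm i) (le_max_left _ _) hc]

end IsBregmanProj

end Projection

lemma mul_le_add_sq_mul_of_sq_le {a E B K : ℝ} (hB : 0 ≤ B) (hK : 0 ≤ K)
    (hE : E ^ 2 ≤ 4 * B * K) : a * E ≤ K + a ^ 2 * B := by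
  rcases hB.eq_or_lt with rfl | hB
  · have hE0 : E = 0 := by nlinarith [sq_nonneg E]
    simpa [hE0] using hK
  · nlinarith [sq_nonneg (E - 2 * a * B)]

lemma mul_sum_sub_mul_le_KLdiv_add {n : ℕ} {x y ℓ : Fin n → ℝ} (hx : ∀ i, 0 < x i) (hy : ∀ i, 0 ≤ y i)
    (hxy : ∑ i, y i = ∑ i, x i) (hℓ : ∀ i, |ℓ i| ≤ 1) (lam : ℝ) :
    lam * ∑ i, (x i - y i) * ℓ i ≤ KLdiv y x + lam ^ 2 * ∑ i, x i := by
  have habs : |∑ i, (x i - y i) * ℓ i| ≤ ∑ i, |y i - x i| :=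
    (abs_sum_le_sum_abs _ _).trans <| sum_le_sum fun i _ => by
      rw [abs_mul, abs_sub_comm]
      exact mul_le_of_le_one_right (abs_nonneg _) (hℓ i)
  have hpinsker := sq_sum_abs_sub_le_KLdiv hy hx
  rw [sum_add_distrib, hxy] at hpinsker
  refine mul_le_add_sq_mul_of_sq_le (sum_nonneg fun i _ => (hx i).le) (KLdiv_nonneg_s13 hy hx) ?_
  calc (∑ i, (x i - y i) * ℓ i) ^ 2 ≤ (∑ i, |y i - x i|) ^ 2 :=
        sq_le_sq.2 (habs.trans_eq (abs_of_nonneg (sum_nonneg fun i _ => abs_nonneg _)).symm)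
    _ ≤ 4 * (∑ i, x i) * KLdiv y x := by linarith

lemma sum_Icc_le_of_add_le {a g : ℕ → ℝ} {c : ℝ} {T : ℕ}
    (h : ∀ t ∈ Icc 1 T, a t + g t ≤ g (t + 1) + c) :
    ∑ t ∈ Icc 1 T, a t ≤ g (T + 1) - g 1 + T * c := by
  induction T with
  | zero => simp
  | succ T ih =>
    rw [sum_Icc_succ_top (by omega)]
    have hT := h (T + 1) (by simp)
    have ih' := ih fun t ht => h t (Icc_subset_Icc_right (by omega) ht)
    push_cast
    linarith

section LazyProjection

variable {n : ℕ}

/-- `KLdiv ρ (exp (-lam * L) * μ₁)` differs from this by a constant depending only on `L`. -/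
noncomputable def regularizedLoss (μ₁ : Fin n → ℝ) (lam : ℝ) (L ρ : Fin n → ℝ) : ℝ :=
  KLdiv ρ μ₁ + lam * ∑ i, ρ i * L i

lemma IsBregmanProj.lam_mul_loss_add_le {κ lam : ℝ} {μ₁ L ℓ x y : Fin n → ℝ}
    (hx : IsBregmanProj κ (fun i => exp (-lam * L i) * μ₁ i) x) (hμ₁ : ∀ i, 0 < μ₁ i)
    (hxpos : ∀ i, 0 < x i) (hy : y ∈ denseMeasures n κ) (hxy : ∑ i, y i = ∑ i, x i)
    (hℓ : ∀ i, |ℓ i| ≤ 1) :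
    lam * ∑ i, x i * ℓ i + regularizedLoss μ₁ lam L x
      ≤ regularizedLoss μ₁ lam (L + ℓ) y + lam ^ 2 * ∑ i, x i := by
  have hpythag := hx.KLdiv_add_KLdiv_le (fun i => mul_pos (exp_pos _) (hμ₁ i)) hxpos hy
  have hμ₁' : ∀ i, μ₁ i ≠ 0 := fun i => (hμ₁ i).ne'
  rw [KLdiv_exp_mul_right hμ₁', KLdiv_exp_mul_right hμ₁'] at hpythag
  have hstab := mul_sum_sub_mul_le_KLdiv_add hxpos (fun i => (hy.1 i).1) hxy hℓ lam
  simp only [regularizedLoss, Pi.add_apply, mul_add, sub_mul, sum_add_distrib,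
    sum_sub_distrib] at hstab ⊢
  linarith

variable {T : ℕ} {κ lam : ℝ} {μ₁ : Fin n → ℝ} {ℓ : ℕ → Fin n → ℝ} {μ : ℕ → Fin n → ℝ}

def cumLoss (ℓ : ℕ → Fin n → ℝ) (t : ℕ) : Fin n → ℝ := fun i => ∑ s ∈ Ico 1 t, ℓ s i

lemma cumLoss_succ {t : ℕ} (ht : 1 ≤ t) : cumLoss ℓ (t + 1) = cumLoss ℓ t + ℓ t :=
  funext fun _ => sum_Ico_succ_top ht _

lemma sum_mul_cumLoss_succ (ρ : Fin n → ℝ) (T : ℕ) :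
    ∑ i, ρ i * cumLoss ℓ (T + 1) i = ∑ t ∈ Icc 1 T, ∑ i, ρ i * ℓ t i := by
  simp only [cumLoss, mul_sum]
  rw [sum_comm, Ico_add_one_right_eq_Icc]

lemma lazyProj_pos_and_sum_eq (hκ : κ ∈ Set.Ioo (0 : ℝ) 1) (hlam : 0 ≤ lam)
    (hμ₁ : ∀ i, μ₁ i = κ) (hℓ : ∀ t, 1 ≤ t → t ≤ T → ∀ i, ℓ t i ∈ Set.Icc (0 : ℝ) 1)
    {t : ℕ} (ht : t ≤ T)
    (hproj : IsBregmanProj κ (fun i => exp (-lam * cumLoss ℓ t i) * μ₁ i) (μ t)) :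
    (∀ i, 0 < μ t i) ∧ ∑ i, μ t i = κ * n := by
  have hm_le : ∀ i, exp (-lam * cumLoss ℓ t i) * μ₁ i ≤ κ := fun i => by
    have hL : 0 ≤ cumLoss ℓ t i := sum_nonneg fun s hs =>
      (hℓ s (mem_Ico.1 hs).1 (by linarith [(mem_Ico.1 hs).2]) i).1
    rw [hμ₁, mul_le_iff_le_one_left hκ.1, exp_le_one_iff]
    nlinarith
  have hm_pos : ∀ i, 0 < exp (-lam * cumLoss ℓ t i) * μ₁ i := fun i => by
    rw [hμ₁]; exact mul_pos (exp_pos _) hκ.1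
  refine ⟨hproj.pos hm_pos fun i => (hm_le i).trans hκ.2.le, hproj.sum_eq_s13 hm_pos ?_⟩
  calc ∑ i, exp (-lam * cumLoss ℓ t i) * μ₁ i ≤ ∑ _i : Fin n, κ := sum_le_sum fun i _ => hm_le i
    _ = κ * n := by simp [mul_comm]

lemma lazy_regret_le_of_sum_eq (hκ : κ ∈ Set.Ioo (0 : ℝ) 1) (hlam : 0 ≤ lam) (hμ₁ : ∀ i, μ₁ i = κ)
    (hℓ : ∀ t, 1 ≤ t → t ≤ T → ∀ i, ℓ t i ∈ Set.Icc (0 : ℝ) 1)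
    (hproj : ∀ t, 1 ≤ t → t ≤ T →
      IsBregmanProj κ (fun i => exp (-lam * cumLoss ℓ t i) * μ₁ i) (μ t))
    {y : Fin n → ℝ} (hy : y ∈ denseMeasures n κ) (hysum : ∑ i, y i = κ * n) :
    lam * ∑ t ∈ Icc 1 T, ∑ i, μ t i * ℓ t i
      ≤ KLdiv y μ₁ + lam * ∑ t ∈ Icc 1 T, ∑ i, y i * ℓ t i + T * (lam ^ 2 * (κ * n)) := by
  have hspec t (h1 : 1 ≤ t) (hT : t ≤ T) :=
    lazyProj_pos_and_sum_eq hκ hlam hμ₁ hℓ hT (hproj t h1 hT)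
  -- The comparator `y` is played after the last round, so that the round bounds telescope.
  set ν : ℕ → Fin n → ℝ := fun t => if t ≤ T then μ t else y
  have hν t (h1 : 1 ≤ t) : ν t ∈ denseMeasures n κ ∧ ∑ i, ν t i = κ * n := by
    by_cases hT : t ≤ T
    · simp only [ν, if_pos hT]
      exact ⟨(hproj t h1 hT).1, (hspec t h1 hT).2⟩
    · simpa [ν, hT] using ⟨hy, hysum⟩
  have hrounds := sum_Icc_le_of_add_le (a := fun t => lam * ∑ i, μ t i * ℓ t i)
    (g := fun t => regularizedLoss μ₁ lam (cumLoss ℓ t) (ν t)) (c := lam ^ 2 * (κ * n))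
    fun t ht => by
      obtain ⟨h1, hT⟩ := mem_Icc.1 ht
      have hround := (hproj t h1 hT).lam_mul_loss_add_le (fun i => hμ₁ i ▸ hκ.1)
        (hspec t h1 hT).1 (hν (t + 1) (by omega)).1
        (by rw [(hν (t + 1) (by omega)).2, (hspec t h1 hT).2])
        fun i => abs_le.2 ⟨by linarith [(hℓ t h1 hT i).1], (hℓ t h1 hT i).2⟩
      rw [← cumLoss_succ h1, (hspec t h1 hT).2] at hround
      simpa [ν, hT] using hround
  have hfirst : 0 ≤ regularizedLoss μ₁ lam (cumLoss ℓ 1) (ν 1) := by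
    simpa [regularizedLoss, cumLoss] using
      KLdiv_nonneg_s13 (fun i => ((hν 1 le_rfl).1.1 i).1) fun i => hμ₁ i ▸ hκ.1
  have hlast : regularizedLoss μ₁ lam (cumLoss ℓ (T + 1)) (ν (T + 1))
      = KLdiv y μ₁ + lam * ∑ t ∈ Icc 1 T, ∑ i, y i * ℓ t i := by
    simp [regularizedLoss, ν, sum_mul_cumLoss_succ]
  beta_reduce at hrounds
  rw [← mul_sum] at hrounds
  linarith

lemma lazy_regret_le (hn : 0 < n) (hκ : κ ∈ Set.Ioo (0 : ℝ) 1) (hlam : 0 ≤ lam)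
    (hμ₁ : ∀ i, μ₁ i = κ) (hℓ : ∀ t, 1 ≤ t → t ≤ T → ∀ i, ℓ t i ∈ Set.Icc (0 : ℝ) 1)
    (hproj : ∀ t, 1 ≤ t → t ≤ T →
      IsBregmanProj κ (fun i => exp (-lam * cumLoss ℓ t i) * μ₁ i) (μ t))
    {ν : Fin n → ℝ} (hν : IsBddMeasure ν) (hνsum : κ * n ≤ ∑ i, ν i) :
    lam * ∑ t ∈ Icc 1 T, ∑ i, μ t i * ℓ t i
      ≤ KLdiv ν μ₁ + lam * (κ * n) * ∑ t ∈ Icc 1 T, ∑ i, (ν i / ∑ k, ν k) * ℓ t i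
        + T * (lam ^ 2 * (κ * n)) := by
  have hS : 0 < ∑ i, ν i := (mul_pos hκ.1 (Nat.cast_pos.2 hn)).trans_le hνsum
  -- Rescaling the comparator to mass exactly `κ n` keeps `ν̂` and does not increase `KL(ν‖μ₁)`.
  set c := κ * n / ∑ i, ν i
  have hc : 0 < c := div_pos (mul_pos hκ.1 (Nat.cast_pos.2 hn)) hS
  have hc1 : c ≤ 1 := (div_le_one hS).2 hνsum
  have hcν : c * ∑ i, ν i = κ * n := div_mul_cancel₀ _ hS.ne'
  have hmem : (fun i => c * ν i) ∈ denseMeasures n κ := by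
    refine ⟨fun i => ⟨mul_nonneg hc.le (hν i).1, mul_le_one₀ hc1 (hν i).1 (hν i).2⟩, ?_⟩
    rw [← mul_sum, hcν]
  have hKL := KLdiv_const_mul_left_le hc hc1 (fun i => (hν i).1) (fun i => hμ₁ i ▸ hκ.1)
    (by simp [hμ₁, hcν, mul_comm])
  have hregret := lazy_regret_le_of_sum_eq hκ hlam hμ₁ hℓ hproj hmem (by rw [← mul_sum, hcν])
  have hnorm : ∑ t ∈ Icc 1 T, ∑ i, c * ν i * ℓ t i
      = κ * n * ∑ t ∈ Icc 1 T, ∑ i, (ν i / ∑ k, ν k) * ℓ t i := by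
    simp only [mul_sum, c]
    exact sum_congr rfl fun t _ => sum_congr rfl fun i _ => by ring
  rw [hnorm] at hregret
  linarith

end LazyProjection

lemma sum_div_sum_mul {n : ℕ} (ρ ℓ : Fin n → ℝ) :
    ∑ i, (ρ i / ∑ k, ρ k) * ℓ i = (∑ i, ρ i * ℓ i) / ∑ k, ρ k := by
  rw [sum_div]
  exact sum_congr rfl fun i _ => div_mul_eq_mul_div _ _ _

/-- **Regret bound for lazily projected dense updates.**  With
`μ_t = Π_Γ(e^{−λΣ_{s<t} ℓ_s}·μ₁)`, for every κ-dense measure `μ`,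
`(1/T)Σ_t M(μ̂_t, ℓ_t) ≤ (1/T)Σ_t M(μ̂, ℓ_t) + λ + KL(μ‖μ₁)/(λκnT)`. -/
theorem lazy_dense_regret_bound {n : ℕ} (hn : 0 < n) (T : ℕ) (hT : 1 ≤ T)
    (κ lam : ℝ) (hκ : κ ∈ Set.Ioo (0:ℝ) 1) (hlam : lam ∈ Set.Ioo (0:ℝ) 1)
    (μ₁ : Fin n → ℝ) (hμ₁ : ∀ i, μ₁ i = κ)
    (ℓ : ℕ → Fin n → ℝ)
    (hℓ : ∀ t, 1 ≤ t → t ≤ T → ∀ i, ℓ t i ∈ Set.Icc (0:ℝ) 1)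
    (μ : ℕ → Fin n → ℝ)
    (hproj : ∀ t, 1 ≤ t → t ≤ T →
      IsBregmanProj κ
        (fun i => Real.exp (-lam * ∑ s ∈ Finset.Ico 1 t, ℓ s i) * μ₁ i) (μ t)) :
    ∀ ν : Fin n → ℝ, IsBddMeasure ν → κ * n ≤ ∑ i, ν i →
      (1 / (T : ℝ)) * ∑ t ∈ Finset.Icc 1 T, ∑ i, (μ t i / ∑ k, μ t k) * ℓ t i ≤
        (1 / (T : ℝ)) * (∑ t ∈ Finset.Icc 1 T, ∑ i, (ν i / ∑ k, ν k) * ℓ t i)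
          + lam + KLdiv ν μ₁ / (lam * κ * n * T) := by
  intro ν hν hνsum
  have hregret := lazy_regret_le hn hκ hlam.1.le hμ₁ hℓ hproj hν hνsum
  have hmass t (ht : t ∈ Icc 1 T) : ∑ i, μ t i = κ * n :=
    (lazyProj_pos_and_sum_eq hκ hlam.1.le hμ₁ hℓ (mem_Icc.1 ht).2
      (hproj t (mem_Icc.1 ht).1 (mem_Icc.1 ht).2)).2
  rw [sum_congr rfl fun t ht => by rw [sum_div_sum_mul, hmass t ht], ← sum_div]
  have hT' : (0 : ℝ) < T := Nat.cast_pos.2 hT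
  have hn' : (0 : ℝ) < n := Nat.cast_pos.2 hn
  have hκ0 := hκ.1
  have hlam0 := hlam.1
  calc 1 / (T : ℝ) * ((∑ t ∈ Icc 1 T, ∑ i, μ t i * ℓ t i) / (κ * n))
      = (lam * ∑ t ∈ Icc 1 T, ∑ i, μ t i * ℓ t i) / (lam * κ * n * T) := by
        field_simp
    _ ≤ (KLdiv ν μ₁ + lam * (κ * n) * ∑ t ∈ Icc 1 T, ∑ i, (ν i / ∑ k, ν k) * ℓ t i
          + T * (lam ^ 2 * (κ * n))) / (lam * κ * n * T) := by
        gcongr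
    _ = _ := by
        field_simp
        ring
end

section
/- Let H = {f : ℝ^d → ℝ, f(x) = z·x for some z ∈ ℝ^d with ‖z‖₂ ≤ 2}. If the set {x₁,…,xₙ} ⊆ ℝ^d is γ-shattered by H, then every sign vector b ∈ {−1,1}ⁿ satisfies ‖ Σ_{i=1}^n bᵢ·xᵢ ‖₂ ≥ γn/2. -/
open scoped RealInnerProductSpace

/-- The set `{x₁,…,xₙ}` is `γ`-shattered by the class of linear functionals
`x ↦ z·x` with `‖z‖₂ ≤ 2`: there are witnesses `rᵢ` such that every sign pattern
`b ∈ {−1,1}ⁿ` is realized with margin `γ`. -/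
def GammaShatteredByBddHalfspaces {d n : ℕ}
    (x : Fin n → EuclideanSpace ℝ (Fin d)) (γ : ℝ) : Prop :=
  ∃ r : Fin n → ℝ,
    ∀ b : Fin n → ℝ, (∀ i, b i = 1 ∨ b i = -1) →
      ∃ z : EuclideanSpace ℝ (Fin d), ‖z‖ ≤ 2 ∧
        ∀ i, γ ≤ b i * (⟪z, x i⟫ - r i)

/-- **Servedio's shattering lemma.**  If `{x₁,…,xₙ}` is γ-shattered by the class
`{x ↦ z·x : ‖z‖₂ ≤ 2}`, then every sign vector `b ∈ {−1,1}ⁿ` satisfies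
`‖Σ bᵢxᵢ‖₂ ≥ γn/2`. -/
theorem shattered_implies_large_signed_sums {d n : ℕ}
    (x : Fin n → EuclideanSpace ℝ (Fin d)) (γ : ℝ)
    (hshatter : GammaShatteredByBddHalfspaces x γ) :
    ∀ b : Fin n → ℝ, (∀ i, b i = 1 ∨ b i = -1) →
      γ * n / 2 ≤ ‖∑ i, b i • x i‖ := by
  obtain ⟨r, hr⟩ := hshatter
  intro b hb
  obtain ⟨z, hz2, hz⟩ := hr b hb
  obtain ⟨z', hz'2, hz'⟩ := hr (fun i => -(b i)) (fun i => by rcases hb i with h | h <;> simp [h])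
  have key : ∀ i, 2 * γ ≤ b i * ⟪z - z', x i⟫ := by
    intro i
    have h1 := hz i
    have h2 := hz' i
    have : 2 * γ ≤ b i * (⟪z, x i⟫ - r i) + -(b i) * (⟪z', x i⟫ - r i) := by linarith
    calc 2 * γ ≤ b i * (⟪z, x i⟫ - r i) + -(b i) * (⟪z', x i⟫ - r i) := this
      _ = b i * (⟪z, x i⟫ - ⟪z', x i⟫) := by ring
      _ = b i * ⟪z - z', x i⟫ := by rw [inner_sub_left]
  have hsum : 2 * γ * n ≤ ⟪z - z', ∑ i, b i • x i⟫ := by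
    rw [inner_sum]
    have : ∀ i, ⟪z - z', b i • x i⟫ = b i * ⟪z - z', x i⟫ := fun i => real_inner_smul_right _ _ _
    simp_rw [this]
    calc 2 * γ * n = ∑ _i : Fin n, 2 * γ := by simp [mul_comm]
      _ ≤ _ := Finset.sum_le_sum fun i _ => key i
  have hcs : ⟪z - z', ∑ i, b i • x i⟫ ≤ 4 * ‖∑ i, b i • x i‖ := by
    calc ⟪z - z', ∑ i, b i • x i⟫ ≤ ‖z - z'‖ * ‖∑ i, b i • x i‖ := real_inner_le_norm _ _
      _ ≤ 4 * ‖∑ i, b i • x i‖ := by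
          have : ‖z - z'‖ ≤ 4 := by
            calc ‖z - z'‖ ≤ ‖z‖ + ‖z'‖ := norm_sub_le _ _
              _ ≤ 4 := by linarith
          exact mul_le_mul_of_nonneg_right this (norm_nonneg _)
  linarith
end

section
/- Let H = {f : ℝ^d → ℝ, f(x) = z·x for some z ∈ ℝ^d with ‖z‖₂ ≤ 2} and let γ > 0. If a set {x₁,…,xₙ} of points in the unit ball of ℝ^d (‖xᵢ‖₂ ≤ 1) is γ-shattered by H, then n ≤ 4/γ². In other words, the fat-shattering dimension of H at margin γ, restricted to the unit ball, is at most 4/γ². -/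
open scoped RealInnerProductSpace

/-!
Realizing a sign pattern `b` and its negation `-b` with margin `γ` by `z` and `w` gives
`2nγ ≤ ⟪z - w, ∑ bᵢ xᵢ⟫ ≤ 4 ‖∑ bᵢ xᵢ‖` (the witnesses `rᵢ` cancel). Choosing the signs greedily,
each new vector making a non-positive inner product with the partial sum, gives
`‖∑ bᵢ xᵢ‖² ≤ n`. Hence `n²γ² ≤ 4n`.
-/

open Finset

section SignedSums

variable {E : Type*} [NormedAddCommGroup E] [InnerProductSpace ℝ E]

lemma exists_sign_norm_smul_add_sq_le (v w : E) :
    ∃ c : ℝ, (c = 1 ∨ c = -1) ∧ ‖c • v + w‖ ^ 2 ≤ ‖v‖ ^ 2 + ‖w‖ ^ 2 := by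
  rcases le_total ⟪v, w⟫ 0 with h | h
  · refine ⟨1, Or.inl rfl, ?_⟩
    rw [one_smul, norm_add_sq_real]
    linarith
  · refine ⟨-1, Or.inr rfl, ?_⟩
    rw [neg_one_smul, norm_add_sq_real, inner_neg_left, norm_neg]
    linarith

lemma exists_signs_norm_sum_sq_le {ι : Type*} (x : ι → E) (hx : ∀ i, ‖x i‖ ≤ 1)
    (s : Finset ι) :
    ∃ b : ι → ℝ, (∀ i, b i = 1 ∨ b i = -1) ∧ ‖∑ i ∈ s, b i • x i‖ ^ 2 ≤ #s := by
  classical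
  induction s using Finset.induction_on with
  | empty => exact ⟨fun _ => 1, fun _ => Or.inl rfl, by simp⟩
  | insert a s ha ih =>
    obtain ⟨b, hb, hbs⟩ := ih
    obtain ⟨c, hc, hcs⟩ := exists_sign_norm_smul_add_sq_le (x a) (∑ i ∈ s, b i • x i)
    refine ⟨Function.update b a c, fun i => ?_, ?_⟩
    · rcases eq_or_ne i a with rfl | hi
      · simpa using hc
      · simpa [Function.update_of_ne hi] using hb i
    · have hsum : ∑ i ∈ s, Function.update b a c i • x i = ∑ i ∈ s, b i • x i :=
        sum_congr rfl fun i hi => by rw [Function.update_of_ne (ne_of_mem_of_not_mem hi ha)]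
      have hxa : ‖x a‖ ^ 2 ≤ 1 := pow_le_one₀ (norm_nonneg _) (hx a)
      rw [sum_insert ha, Function.update_self, hsum, card_insert_of_notMem ha]
      push_cast
      linarith

end SignedSums

lemma GammaShatteredByBddHalfspaces.mul_le_two_mul_norm_sum {d n : ℕ}
    {x : Fin n → EuclideanSpace ℝ (Fin d)} {γ : ℝ} (h : GammaShatteredByBddHalfspaces x γ)
    {b : Fin n → ℝ} (hb : ∀ i, b i = 1 ∨ b i = -1) :
    n * γ ≤ 2 * ‖∑ i, b i • x i‖ := by
  obtain ⟨r, hr⟩ := h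
  obtain ⟨z, hz, hzb⟩ := hr b hb
  obtain ⟨w, hw, hwb⟩ := hr (-b) fun i => by rcases hb i with h | h <;> simp [h]
  have margin (i : Fin n) : 2 * γ ≤ b i * ⟪z - w, x i⟫ := by
    have := hzb i
    have := hwb i
    rw [inner_sub_left]
    simp only [Pi.neg_apply] at *
    linarith
  have : 2 * (n * γ) ≤ 4 * ‖∑ i, b i • x i‖ :=
    calc 2 * (n * γ) = ∑ _i : Fin n, 2 * γ := by simp; ring
      _ ≤ ∑ i, b i * ⟪z - w, x i⟫ := sum_le_sum fun i _ => margin i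
      _ = ⟪z - w, ∑ i, b i • x i⟫ := by simp [inner_sum, real_inner_smul_right]
      _ ≤ ‖z - w‖ * ‖∑ i, b i • x i‖ := real_inner_le_norm _ _
      _ ≤ 4 * ‖∑ i, b i • x i‖ :=
        mul_le_mul_of_nonneg_right ((norm_sub_le z w).trans (by linarith)) (norm_nonneg _)
  linarith

/-- **Fat-shattering dimension of bounded-norm halfspaces.**  If a set of `n`
points of the unit ball is γ-shattered by `{x ↦ z·x : ‖z‖₂ ≤ 2}`, then
`n ≤ 4/γ²`; i.e. the fat-shattering dimension at margin `γ` is at most `4/γ²`. -/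
theorem fat_shattering_dimension_bound {d n : ℕ} (γ : ℝ) (hγ : 0 < γ)
    (x : Fin n → EuclideanSpace ℝ (Fin d)) (hx : ∀ i, ‖x i‖ ≤ 1)
    (hshatter : GammaShatteredByBddHalfspaces x γ) :
    (n : ℝ) ≤ 4 / γ ^ 2 := by
  obtain ⟨b, hb, hsum⟩ := exists_signs_norm_sum_sq_le x hx univ
  rw [card_univ, Fintype.card_fin] at hsum
  have hmargin := hshatter.mul_le_two_mul_norm_sum hb
  have hsq : ((n : ℝ) * γ) ^ 2 ≤ 4 * n := by
    nlinarith [pow_le_pow_left₀ (by positivity) hmargin 2]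
  rw [le_div_iff₀ (by positivity)]
  rcases (Nat.cast_nonneg n : (0 : ℝ) ≤ n).eq_or_lt with hn | hn
  · rw [← hn, zero_mul]; norm_num
  · nlinarith
end
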